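/- A word a₁...aₙ (with 1 ≤ aᵢ ≤ 2i−1) encodes a sign-disconnected standard permutation if and only if there exists k ≥ 2 such that a_k = 2k−1 and a_j ≥ 2k−1 for all j > k. -/
import Mathlib


/-- A sequence `π` lists each element of `{±1, …, ±n}` exactly once among
positions `0, …, 2n-1`. -/
def IsSgnPerm (n : ℕ) (π : ℕ → ℤ) : Prop :=
  (Finset.range (2*n)).image π = (Finset.Icc (-(n:ℤ)) (n:ℤ)).erase 0

/-- A standard permutation of `{±1, …, ±n}`: each `i` appears before `-i`, and
the negative entries appear in the order `-1, -2, …, -n`. -/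
def IsStdPerm (n : ℕ) (π : ℕ → ℤ) : Prop :=
  IsSgnPerm n π ∧
  (∀ k l, k < 2*n → l < 2*n → 0 < π k → π l = -π k → k < l) ∧
  (∀ k l, k < 2*n → l < 2*n → π k < 0 → π l < 0 → (k < l ↔ π l < π k))

/-- Sign-connectedness: every proper nonempty initial segment contains exactly
one element of some pair `{j, -j}`. -/
def SignConnected (n : ℕ) (π : ℕ → ℤ) : Prop :=
  ∀ m, 1 ≤ m → m < 2*n → ∃ j : ℤ, 1 ≤ j ∧ j ≤ n ∧
    Xor' (∃ i < m, π i = j) (∃ i < m, π i = -j)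

/-- The word `w` (1-indexed, `w k` defined for `1 ≤ k ≤ n`) encodes the
standard permutation `π` via arc diagrams: `w k` is the (1-indexed) position
of the entry `k` among the entries of absolute value at most `k`. -/
def Encodes (n : ℕ) (w : ℕ → ℕ) (π : ℕ → ℤ) : Prop :=
  ∀ k, 1 ≤ k → k ≤ n → ∀ p < 2*n, π p = (k : ℤ) →
    w k = ((Finset.range (p+1)).filter (fun j => |π j| ≤ (k : ℤ))).card

/-- A word `a₁…aₙ` encodes a sign-disconnected standard
permutation iff there is a `k ≥ 2` with `a_k = 2k-1` and `a_j ≥ 2k-1` for all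
`j > k`. -/
lemma card_pmset (a : ℕ) : ((Finset.Icc (-(a:ℤ)) (a:ℤ)).erase 0).card = 2*a := by
  rw [Finset.card_erase_of_mem (by simp), Int.card_Icc]
  omega

lemma sgn_inj {n : ℕ} {π : ℕ → ℤ} (h : IsSgnPerm n π) :
    Set.InjOn π (Finset.range (2*n)) := by
  apply Finset.injOn_of_card_image_eq
  rw [h, card_pmset, Finset.card_range]

lemma sgn_mem {n : ℕ} {π : ℕ → ℤ} (h : IsSgnPerm n π) {p : ℕ} (hp : p < 2*n) :
    π p ≠ 0 ∧ -(n:ℤ) ≤ π p ∧ π p ≤ n := by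
  have hm : π p ∈ (Finset.Icc (-(n:ℤ)) (n:ℤ)).erase 0 := by
    rw [← h]; exact Finset.mem_image_of_mem π (Finset.mem_range.mpr hp)
  rw [Finset.mem_erase, Finset.mem_Icc] at hm
  tauto

lemma sgn_surj {n : ℕ} {π : ℕ → ℤ} (h : IsSgnPerm n π) {v : ℤ} (hv : v ≠ 0)
    (h1 : -(n:ℤ) ≤ v) (h2 : v ≤ n) : ∃ p < 2*n, π p = v := by
  have hm : v ∈ (Finset.range (2*n)).image π := by
    rw [h, Finset.mem_erase, Finset.mem_Icc]; exact ⟨hv, h1, h2⟩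
  simpa [Finset.mem_image, Finset.mem_range] using hm

theorem stmt_8 (n : ℕ) (w : ℕ → ℕ) (π : ℕ → ℤ) (hπ : IsStdPerm n π)
    (hw : ∀ i, 1 ≤ i → i ≤ n → 1 ≤ w i ∧ w i ≤ 2*i - 1)
    (henc : Encodes n w π) :
    ¬ SignConnected n π ↔
      ∃ k, 2 ≤ k ∧ k ≤ n ∧ w k = 2*k - 1 ∧
        ∀ j, k < j → j ≤ n → 2*k - 1 ≤ w j := by
  obtain ⟨hsgn, hbefore, hord⟩ := hπ
  have hinj := sgn_inj hsgn
  constructor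
  · -- forward
    intro hnSC
    rw [SignConnected] at hnSC
    push_neg at hnSC
    obtain ⟨m, hm1, hm2n, hcl⟩ := hnSC
    set S := (Finset.range m).image π with hSdef
    have hSm : ∀ v : ℤ, v ∈ S ↔ ∃ i < m, π i = v := by
      intro v; simp [hSdef, Finset.mem_image, Finset.mem_range]
    have hclose : ∀ j : ℤ, 1 ≤ j → j ≤ n → ((j ∈ S) ↔ (-j ∈ S)) := by
      intro j hj1 hjn
      have := (not_xor _ _).mp (hcl j hj1 hjn)
      rw [hSm, hSm]; exact this
    have hSbound : ∀ v : ℤ, v ∈ S → v ≠ 0 ∧ -(n:ℤ) ≤ v ∧ v ≤ n := by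
      intro v hv
      obtain ⟨i, him, hiv⟩ := (hSm v).mp hv
      rw [← hiv]; exact sgn_mem hsgn (by omega)
    have hdown : ∀ i j : ℤ, 1 ≤ i → i ≤ j → -j ∈ S → -i ∈ S := by
      intro i j hi1 hij hjS
      obtain ⟨q, hqm, hqv⟩ := (hSm (-j)).mp hjS
      have hjn : j ≤ n := by
        have := (hSbound _ hjS).2.1; omega
      rcases eq_or_lt_of_le hij with h | h
      · rwa [h]
      · obtain ⟨p', hp'2n, hp'v⟩ := sgn_surj hsgn (v := -i) (by omega) (by omega) (by omega)
        have hpq : p' < q := by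
          rw [hord p' q hp'2n (by omega) (by omega) (by omega)]
          omega
        exact (hSm (-i)).mpr ⟨p', by omega, hp'v⟩
    have hn1 : 1 ≤ n := by omega
    have h0pos : 0 < π 0 := by
      rcases (sgn_mem hsgn (p := 0) (by omega)).1.lt_or_gt with h | h
      · exfalso
        obtain ⟨p, hp2n, hpv⟩ := sgn_surj hsgn (v := -π 0)
          (by omega) (by have := sgn_mem hsgn (p := 0) (by omega : 0 < 2*n); omega)
          (by have := sgn_mem hsgn (p := 0) (by omega : 0 < 2*n); omega)
        have := hbefore p 0 hp2n (by omega) (by omega) (by omega)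
        omega
      · exact h
    have h0S : π 0 ∈ S := (hSm _).mpr ⟨0, by omega, rfl⟩
    set T := (Finset.Icc 1 n).filter (fun j : ℕ => -(j:ℤ) ∈ S) with hTdef
    have h0b := sgn_mem hsgn (p := 0) (by omega : 0 < 2*n)
    have hj₀ : (π 0).toNat ∈ T := by
      rw [hTdef, Finset.mem_filter, Finset.mem_Icc]
      refine ⟨⟨by omega, by omega⟩, ?_⟩
      have : ((π 0).toNat : ℤ) = π 0 := by omega
      rw [this]
      exact (hclose (π 0) (by omega) (by omega)).mp h0S
    have hTne : T.Nonempty := ⟨_, hj₀⟩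
    set k' := T.max' hTne with hk'def
    have hk'T : k' ∈ T := T.max'_mem hTne
    have hk'1 : 1 ≤ k' := by
      have := hk'T; rw [hTdef, Finset.mem_filter, Finset.mem_Icc] at this; omega
    have hk'n : k' ≤ n := by
      have := hk'T; rw [hTdef, Finset.mem_filter, Finset.mem_Icc] at this; omega
    have hk'S : -(k':ℤ) ∈ S := by
      have := hk'T; rw [hTdef, Finset.mem_filter] at this; exact this.2
    have hmax : ∀ j : ℕ, j ∈ T → j ≤ k' := fun j hj => T.le_max' j hj
    -- characterization of S
    have hSchar : ∀ v : ℤ, v ∈ S ↔ (v ≠ 0 ∧ -(k':ℤ) ≤ v ∧ v ≤ k') := by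
      intro v
      constructor
      · intro hv
        obtain ⟨hv0, hvn1, hvn2⟩ := hSbound v hv
        rcases hv0.lt_or_gt with h | h
        · have hjT : (-v).toNat ∈ T := by
            rw [hTdef, Finset.mem_filter, Finset.mem_Icc]
            refine ⟨⟨by omega, by omega⟩, ?_⟩
            have : -(((-v).toNat : ℤ)) = v := by omega
            rwa [this]
          have := hmax _ hjT
          omega
        · have hvS : -v ∈ S := (hclose v (by omega) (by omega)).mp hv
          have hjT : v.toNat ∈ T := by
            rw [hTdef, Finset.mem_filter, Finset.mem_Icc]
            refine ⟨⟨by omega, by omega⟩, ?_⟩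
            have : -((v.toNat : ℤ)) = -v := by omega
            rwa [this]
          have := hmax _ hjT
          omega
      · rintro ⟨hv0, hv1, hv2⟩
        rcases hv0.lt_or_gt with h | h
        · have := hdown (-v) k' (by omega) (by omega) hk'S
          have he : -(-v) = v := by ring
          rwa [he] at this
        · have := hdown v k' (by omega) (by omega) hk'S
          exact (hclose v (by omega) (by omega)).mpr this
    have hScard : S.card = m := by
      rw [hSdef, Finset.card_image_of_injOn, Finset.card_range]
      exact hinj.mono (by intro x hx; simp at hx ⊢; omega)
    have hSeq : S = (Finset.Icc (-(k':ℤ)) (k':ℤ)).erase 0 := by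
      ext v
      rw [hSchar, Finset.mem_erase, Finset.mem_Icc]
    have hm2k' : m = 2*k' := by
      have := hScard
      rw [hSeq, card_pmset] at this
      omega
    -- position of k'+1
    have hk'n' : k' + 1 ≤ n := by omega
    obtain ⟨p, hp2n, hpv⟩ := sgn_surj hsgn (v := ((k'+1 : ℕ) : ℤ))
      (by push_cast; omega) (by push_cast; omega) (by push_cast; omega)
    have hnotS : ∀ i, m ≤ i → i < 2*n → π i ∉ S := by
      intro i hmi hi2n hiS
      obtain ⟨i', hi'm, hi'v⟩ := (hSm _).mp hiS
      have : i' = i := hinj (by simp; omega) (by simp; omega) hi'v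
      omega
    have hmp : m ≤ p := by
      by_contra h
      have : π p ∈ S := (hSm _).mpr ⟨p, by omega, rfl⟩
      rw [hSchar] at this
      push_cast at hpv
      omega
    refine ⟨k'+1, by omega, hk'n', ?_, ?_⟩
    · rw [henc (k'+1) (by omega) hk'n' p hp2n hpv]
      have hfe : (Finset.range (p+1)).filter (fun j => |π j| ≤ ((k'+1:ℕ) : ℤ))
          = insert p (Finset.range m) := by
        ext i
        simp only [Finset.mem_filter, Finset.mem_range, Finset.mem_insert]
        constructor
        · rintro ⟨hip, habs⟩
          by_contra hcon
          push_neg at hcon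
          obtain ⟨hne, hmi⟩ := hcon
          have hi2n : i < 2*n := by omega
          have hiS := hnotS i (by omega) hi2n
          rw [hSchar] at hiS
          push_neg at hiS
          have hi0 := (sgn_mem hsgn hi2n).1
          push_cast at habs
          obtain ⟨h1, h2⟩ := abs_le.mp habs
          have hrange : π i < -(k':ℤ) ∨ (k':ℤ) < π i := by
            by_contra hcon2
            push_neg at hcon2
            have := hiS hi0 hcon2.1; omega
          push_cast at hpv
          rcases (by omega : π i = (k':ℤ)+1 ∨ π i = -((k':ℤ)+1)) with h | h
          · exact hne (hinj (by simp; omega) (by simp; omega) (h.trans hpv.symm))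
          · have := hbefore p i hp2n hi2n (by omega) (by omega)
            omega
        · rintro (rfl | him)
          · refine ⟨by omega, ?_⟩
            rw [hpv]
            push_cast
            rw [abs_of_pos (by omega)]
          · refine ⟨by omega, ?_⟩
            have : π i ∈ S := (hSm _).mpr ⟨i, him, rfl⟩
            rw [hSchar] at this
            push_cast
            rw [abs_le]
            omega
      rw [hfe, Finset.card_insert_of_notMem (by simp; omega), Finset.card_range]
      omega
    · intro j hkj hjn
      obtain ⟨pj, hpj2n, hpjv⟩ := sgn_surj hsgn (v := ((j : ℕ) : ℤ))
        (by push_cast; omega) (by push_cast; omega) (by push_cast; omega)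
      rw [henc j (by omega) hjn pj hpj2n hpjv]
      have hmpj : m ≤ pj := by
        by_contra h
        have : π pj ∈ S := (hSm _).mpr ⟨pj, by omega, rfl⟩
        rw [hSchar] at this
        push_cast at hpjv
        omega
      have hsub : insert pj (Finset.range m) ⊆
          (Finset.range (pj+1)).filter (fun i => |π i| ≤ ((j:ℕ) : ℤ)) := by
        intro i hi
        simp only [Finset.mem_insert, Finset.mem_range] at hi
        simp only [Finset.mem_filter, Finset.mem_range]
        rcases hi with rfl | him
        · refine ⟨by omega, ?_⟩
          rw [hpjv]
          push_cast
          rw [abs_of_pos (by omega)]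
        · refine ⟨by omega, ?_⟩
          have : π i ∈ S := (hSm _).mpr ⟨i, him, rfl⟩
          rw [hSchar] at this
          push_cast
          rw [abs_le]
          omega
      have := Finset.card_le_card hsub
      rw [Finset.card_insert_of_notMem (by simp; omega), Finset.card_range] at this
      omega
  · -- backward
    rintro ⟨k, hk2, hkn, hwk, hlater⟩
    intro hSC
    have hBpos : ∀ q, q < 2*k-2 → 0 < π q → π q < k := by
      intro q hq hqpos
      by_contra h
      push_neg at h
      have hq2n : q < 2*n := by omega
      have hb := sgn_mem hsgn hq2n
      set j := (π q).toNat with hjdef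
      have hjc : ((j:ℕ) : ℤ) = π q := by omega
      have hwj : 2*k-1 ≤ w j := by
        rcases eq_or_lt_of_le (by omega : k ≤ j) with he | hlt
        · rw [← he, hwk]
        · exact hlater j hlt (by omega)
      rw [henc j (by omega) (by omega) q hq2n hjc.symm] at hwj
      have := Finset.card_filter_le (Finset.range (q+1)) (fun i => |π i| ≤ ((j:ℕ):ℤ))
      rw [Finset.card_range] at this
      omega
    have hB : ∀ q, q < 2*k-2 → |π q| < k := by
      intro q hq
      have hq2n : q < 2*n := by omega
      have hb := sgn_mem hsgn hq2n
      rcases hb.1.lt_or_gt with h | h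
      · obtain ⟨p', hp'2n, hp'v⟩ := sgn_surj hsgn (v := -π q) (by omega) (by omega) (by omega)
        have hpq : p' < q := hbefore p' q hp'2n hq2n (by omega) (by omega)
        have := hBpos p' (by omega) (by omega)
        rw [abs_of_neg h]
        omega
      · have := hBpos q hq h
        rw [abs_of_pos h]
        omega
    have hImg : (Finset.range (2*k-2)).image π
        = (Finset.Icc (-((k-1:ℕ):ℤ)) ((k-1:ℕ):ℤ)).erase 0 := by
      apply Finset.eq_of_subset_of_card_le
      · intro v hv
        simp only [Finset.mem_image, Finset.mem_range] at hv
        obtain ⟨q, hq, rfl⟩ := hv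
        have h1 := hB q hq
        have h2 := (sgn_mem hsgn (by omega : q < 2*n)).1
        rw [Finset.mem_erase, Finset.mem_Icc]
        rcases abs_lt.mp h1 with ⟨ha, hb⟩
        push_cast
        refine ⟨h2, by omega, by omega⟩
      · rw [card_pmset, Finset.card_image_of_injOn, Finset.card_range]
        · omega
        · exact hinj.mono (by intro x hx; simp at hx ⊢; omega)
    obtain ⟨j, hj1, hjn, hxor⟩ := hSC (2*k-2) (by omega) (by omega)
    have hiff : (∃ i < 2*k-2, π i = j) ↔ (∃ i < 2*k-2, π i = -j) := by
      by_cases hcase : j ≤ ((k-1:ℕ):ℤ)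
      · constructor <;> intro _
        · have : -j ∈ (Finset.range (2*k-2)).image π := by
            rw [hImg, Finset.mem_erase, Finset.mem_Icc]
            exact ⟨by omega, by omega, by omega⟩
          simpa [Finset.mem_image, Finset.mem_range] using this
        · have : j ∈ (Finset.range (2*k-2)).image π := by
            rw [hImg, Finset.mem_erase, Finset.mem_Icc]
            exact ⟨by omega, by omega, by omega⟩
          simpa [Finset.mem_image, Finset.mem_range] using this
      · push_cast at hcase
        constructor <;> rintro ⟨i, hi, hiv⟩
        · have := hB i hi
          rw [hiv, abs_of_pos (by omega)] at this
          omega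
        · have := hB i hi
          rw [hiv, abs_of_neg (by omega)] at this
          omega
    rw [← not_xor] at hiff
    exact hiff hxor
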